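/- A finite simple graph G is closed if and only if there exists a labeling of its vertices by 1,…,n such that for every edge {i,j} of G with i < j and every k with i < k < j, both {i,k} ∈ E(G) and {k,j} ∈ E(G). -/
import Mathlib


/-- `G` is closed with respect to the labeling `σ` of its vertices by `1, …, n`. -/
def ClosedWrt {V : Type*} {n : ℕ} (G : SimpleGraph V) (σ : V ≃ Fin n) : Prop :=
  ∀ i j k l : V, G.Adj i j → G.Adj k l → σ i < σ j → σ k < σ l →
    (i = k → j ≠ l → G.Adj j l) ∧ (j = l → i ≠ k → G.Adj i k)

namespace ClosedAux

variable {V : Type*} {n : ℕ} {G : SimpleGraph V} {σ : V ≃ Fin n}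

/-- `N⁺` is a clique. -/
lemma up (h : ClosedWrt G σ) {a b c : V} (h1 : G.Adj a b) (h2 : G.Adj a c)
    (l1 : σ a < σ b) (l2 : σ a < σ c) (hne : b ≠ c) : G.Adj b c :=
  (h a b a c h1 h2 l1 l2).1 rfl hne

/-- `N⁻` is a clique. -/
lemma down (h : ClosedWrt G σ) {a b c : V} (h1 : G.Adj a c) (h2 : G.Adj b c)
    (l1 : σ a < σ c) (l2 : σ b < σ c) (hne : a ≠ b) : G.Adj a b :=
  (h a c b c h1 h2 l1 l2).2 rfl hne

/-- Shortcut a walk at an interior vertex `z` whose neighbours along the walk are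
pairwise adjacent. -/
lemma shortcut [DecidableEq V] {x y z : V} (p : G.Walk x y) (hz : z ∈ p.support)
    (hzx : z ≠ x) (hzy : z ≠ y)
    (H : ∀ a b : V, a ∈ p.support → b ∈ p.support → G.Adj z a → G.Adj z b → a ≠ b → G.Adj a b) :
    ∃ q : G.Walk x y, q.length < p.length ∧ ∀ w ∈ q.support, w ∈ p.support := by
  set p1 : G.Walk x z := p.takeUntil z hz with hp1
  set p2 : G.Walk z y := p.dropUntil z hz with hp2
  have hspec : p1.append p2 = p := p.take_spec hz
  have hlen : p1.length + p2.length = p.length := by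
    rw [← hspec, SimpleGraph.Walk.length_append]
  obtain ⟨a, hza, q1, hq1⟩ := SimpleGraph.Walk.exists_eq_cons_of_ne hzx p1.reverse
  obtain ⟨b, hzb, q2, hq2⟩ := SimpleGraph.Walk.exists_eq_cons_of_ne hzy p2
  have hq1len : p1.length = q1.length + 1 := by
    rw [← SimpleGraph.Walk.length_reverse p1, hq1, SimpleGraph.Walk.length_cons]
  have hq2len : p2.length = q2.length + 1 := by
    rw [hq2, SimpleGraph.Walk.length_cons]
  have ha : a ∈ p.support := by
    apply p.support_takeUntil_subset hz
    have : a ∈ p1.reverse.support := by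
      rw [hq1, SimpleGraph.Walk.support_cons]
      exact List.mem_cons_of_mem _ q1.start_mem_support
    rwa [SimpleGraph.Walk.support_reverse, List.mem_reverse] at this
  have hb : b ∈ p.support := by
    apply p.support_dropUntil_subset hz
    rw [← hp2, hq2, SimpleGraph.Walk.support_cons]
    exact List.mem_cons_of_mem _ q2.start_mem_support
  have hsub1 : ∀ w ∈ q1.support, w ∈ p.support := by
    intro w hw
    apply p.support_takeUntil_subset hz
    have : w ∈ p1.reverse.support := by
      rw [hq1, SimpleGraph.Walk.support_cons]; exact List.mem_cons_of_mem _ hw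
    rwa [SimpleGraph.Walk.support_reverse, List.mem_reverse] at this
  have hsub2 : ∀ w ∈ q2.support, w ∈ p.support := by
    intro w hw
    apply p.support_dropUntil_subset hz
    rw [← hp2, hq2, SimpleGraph.Walk.support_cons]
    exact List.mem_cons_of_mem _ hw
  by_cases hab : a = b
  · subst hab
    refine ⟨q1.reverse.append q2, ?_, ?_⟩
    · rw [SimpleGraph.Walk.length_append, SimpleGraph.Walk.length_reverse]
      omega
    · intro w hw
      rw [SimpleGraph.Walk.mem_support_append_iff] at hw
      rcases hw with hw | hw
      · rw [SimpleGraph.Walk.support_reverse, List.mem_reverse] at hw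
        exact hsub1 w hw
      · exact hsub2 w hw
  · have hadj : G.Adj a b := H a b ha hb hza hzb hab
    refine ⟨q1.reverse.append (SimpleGraph.Walk.cons hadj q2), ?_, ?_⟩
    · rw [SimpleGraph.Walk.length_append, SimpleGraph.Walk.length_reverse,
        SimpleGraph.Walk.length_cons]
      omega
    · intro w hw
      rw [SimpleGraph.Walk.mem_support_append_iff] at hw
      rcases hw with hw | hw
      · rw [SimpleGraph.Walk.support_reverse, List.mem_reverse] at hw
        exact hsub1 w hw
      · rw [SimpleGraph.Walk.support_cons] at hw
        rcases List.mem_cons.mp hw with rfl | hw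
        · exact ha
        · exact hsub2 w hw

/-- Any walk can be confined to the interval spanned by its endpoints. -/
lemma confine [DecidableEq V] (h : ClosedWrt G σ) :
    ∀ (L : ℕ) (x y : V) (p : G.Walk x y), p.length ≤ L →
      ∃ q : G.Walk x y, ∀ z ∈ q.support,
        (σ x ≤ σ z ∨ σ y ≤ σ z) ∧ (σ z ≤ σ x ∨ σ z ≤ σ y) := by
  intro L
  induction L with
  | zero =>
    intro x y p hp
    refine ⟨p, ?_⟩
    have hlen : p.support.length = 1 := by
      rw [SimpleGraph.Walk.length_support]; omega
    have hx : x ∈ p.support := p.start_mem_support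
    intro z hz
    obtain ⟨a, hae⟩ := List.length_eq_one_iff.mp hlen
    rw [hae, List.mem_singleton] at hz hx
    rw [hz, ← hx]
    exact ⟨Or.inl le_rfl, Or.inl le_rfl⟩
  | succ L ih =>
    intro x y p hp
    have hne : (p.support.toFinset : Finset V).Nonempty :=
      ⟨x, List.mem_toFinset.mpr p.start_mem_support⟩
    obtain ⟨zmin, hzmin_mem, hzmin⟩ := Finset.exists_min_image p.support.toFinset (fun v => σ v) hne
    obtain ⟨zmax, hzmax_mem, hzmax⟩ := Finset.exists_max_image p.support.toFinset (fun v => σ v) hne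
    rw [List.mem_toFinset] at hzmin_mem hzmax_mem
    by_cases hmin : zmin = x ∨ zmin = y
    · by_cases hmax : zmax = x ∨ zmax = y
      · refine ⟨p, fun z hz => ?_⟩
        have h1 : σ zmin ≤ σ z := hzmin z (List.mem_toFinset.mpr hz)
        have h2 : σ z ≤ σ zmax := hzmax z (List.mem_toFinset.mpr hz)
        constructor
        · rcases hmin with rfl | rfl
          · exact Or.inl h1
          · exact Or.inr h1
        · rcases hmax with rfl | rfl
          · exact Or.inl h2
          · exact Or.inr h2
      · push_neg at hmax
        obtain ⟨q, hqlen, hqsub⟩ := shortcut p hzmax_mem hmax.1 hmax.2 (by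
          intro a b hamem hbmem haa hbb hab
          have h1 : σ a < σ zmax :=
            lt_of_le_of_ne (hzmax a (List.mem_toFinset.mpr hamem))
              (fun hh => haa.ne' (σ.injective hh))
          have h2 : σ b < σ zmax :=
            lt_of_le_of_ne (hzmax b (List.mem_toFinset.mpr hbmem))
              (fun hh => hbb.ne' (σ.injective hh))
          exact down h haa.symm hbb.symm h1 h2 hab)
        exact ih x y q (by omega)
    · push_neg at hmin
      obtain ⟨q, hqlen, hqsub⟩ := shortcut p hzmin_mem hmin.1 hmin.2 (by
        intro a b hamem hbmem haa hbb hab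
        have h1 : σ zmin < σ a :=
          lt_of_le_of_ne (hzmin a (List.mem_toFinset.mpr hamem))
            (fun hh => haa.ne (σ.injective hh))
        have h2 : σ zmin < σ b :=
          lt_of_le_of_ne (hzmin b (List.mem_toFinset.mpr hbmem))
            (fun hh => hbb.ne (σ.injective hh))
        exact up h haa hbb h1 h2 hab)
      exact ih x y q (by omega)

/-- Key connected-case lemma, by induction on walk length. -/
lemma main (h : ClosedWrt G σ) :
    ∀ (L : ℕ) (u v w : V) (p : G.Walk v u), p.length ≤ L →
      G.Adj u w → σ u < σ v → σ v < σ w →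
      (∀ z ∈ p.support, σ u ≤ σ z ∧ σ z < σ w) → G.Adj u v := by
  intro L
  induction L with
  | zero =>
    intro u v w p hp huw h1 h2 hb
    have hp0 : p.length = 0 := Nat.le_zero.mp hp
    have hvu : v = u := SimpleGraph.Walk.eq_of_length_eq_zero hp0
    exact absurd h1 (by rw [hvu]; exact lt_irrefl _)
  | succ L ih =>
    intro u v w p hp huw h1 h2 hb
    cases p with
    | nil => exact absurd h1 (lt_irrefl _)
    | cons hvy p' =>
      rename_i y
      have hylen : p'.length ≤ L := by
        rw [SimpleGraph.Walk.length_cons] at hp; omega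
      have hysup : y ∈ (SimpleGraph.Walk.cons hvy p').support := by
        rw [SimpleGraph.Walk.support_cons]
        exact List.mem_cons_of_mem _ p'.start_mem_support
      have hb' : ∀ z ∈ p'.support, σ u ≤ σ z ∧ σ z < σ w := by
        intro z hz
        exact hb z (by rw [SimpleGraph.Walk.support_cons]; exact List.mem_cons_of_mem _ hz)
      obtain ⟨hyu, hyw⟩ := hb y hysup
      by_cases hyequ : y = u
      · subst hyequ; exact hvy.symm
      by_cases hyeqv : y = v
      · subst hyeqv
        exact ih u y w p' hylen huw h1 h2 hb'
      · have hyu' : σ u < σ y := lt_of_le_of_ne hyu (fun hh => hyequ (σ.injective hh.symm))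
        have hAuy : G.Adj u y := ih u y w p' hylen huw hyu' hyw hb'
        have hAyw : G.Adj y w :=
          up h hAuy huw hyu' (h1.trans h2) (fun hh => (lt_irrefl _ (hh ▸ hyw)))
        have hyv : σ y ≠ σ v := fun hh => hyeqv (σ.injective hh)
        rcases lt_or_gt_of_ne hyv with hlt | hgt
        · have hAvw : G.Adj v w :=
            up h hvy.symm hAyw hlt hyw (fun hh => (lt_irrefl _ (hh ▸ h2)))
          exact down h huw hAvw (h1.trans h2) h2 (fun hh => (lt_irrefl _ (hh ▸ h1)))
        · exact down h hAuy hvy hyu' hgt (fun hh => (lt_irrefl _ (hh ▸ h1)))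

/-- Umbrella property for vertices reachable from the edge. -/
lemma adj_of_between [DecidableEq V] (h : ClosedWrt G σ) {u v w : V}
    (huw : G.Adj u w) (h1 : σ u < σ v) (h2 : σ v < σ w) (hr : G.Reachable v u) :
    G.Adj u v := by
  obtain ⟨p⟩ := hr
  obtain ⟨q, hq⟩ := confine h p.length v u p le_rfl
  refine main h q.length u v w q le_rfl huw h1 h2 ?_
  intro z hz
  obtain ⟨hA, hB⟩ := hq z hz
  have hle1 : σ u ≤ σ z := by
    rcases hA with hh | hh
    · exact le_trans h1.le hh
    · exact hh
  have hle2 : σ z ≤ σ v := by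
    rcases hB with hh | hh
    · exact hh
    · exact le_trans hh h1.le
  exact ⟨hle1, lt_of_le_of_lt hle2 h2⟩

/-- Sorting an injective map into a linear order yields a monotone labeling. -/
lemma exists_mono_equiv {α β : Type*} [Fintype α] [LinearOrder β] (f : α → β)
    (hf : Function.Injective f) :
    ∃ τ : α ≃ Fin (Fintype.card α), ∀ a b : α, τ a < τ b ↔ f a < f b := by
  classical
  set s : Finset β := Finset.univ.image f with hs
  have hscard : s.card = Fintype.card α := by
    rw [hs, Finset.card_image_of_injective _ hf, Finset.card_univ]
  set oi := s.orderIsoOfFin hscard with hoi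
  have hmem : ∀ a : α, f a ∈ s := fun a => Finset.mem_image.mpr ⟨a, Finset.mem_univ a, rfl⟩
  set g : α → Fin (Fintype.card α) := fun a => oi.symm ⟨f a, hmem a⟩ with hg
  have ginj : Function.Injective g := by
    intro a b hab
    exact hf (congrArg Subtype.val (oi.symm.injective hab))
  have gbij : Function.Bijective g :=
    (Fintype.bijective_iff_injective_and_card g).mpr ⟨ginj, by simp⟩
  refine ⟨Equiv.ofBijective g gbij, ?_⟩
  intro a b
  show g a < g b ↔ _
  rw [hg]
  simp only [Equiv.coe_fn_mk]
  rw [oi.symm.lt_iff_lt, Subtype.mk_lt_mk]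

section Comp

variable (G σ)
variable [Fintype V] [DecidableRel G.Reachable]

lemma filter_reachable_nonempty (v : V) :
    ((Finset.univ.filter (fun x => G.Reachable x v)).image σ).Nonempty := by
  refine ⟨σ v, Finset.mem_image.mpr ⟨v, ?_, rfl⟩⟩
  simp only [Finset.mem_filter, Finset.mem_univ, true_and]
  exact SimpleGraph.Reachable.refl v

/-- The minimal label in the connected component of `v`. -/
noncomputable def comp (v : V) : Fin n :=
  ((Finset.univ.filter (fun x => G.Reachable x v)).image σ).min'
    (filter_reachable_nonempty G σ v)

variable {G σ}

lemma comp_le {x v : V} (hr : G.Reachable x v) : comp G σ v ≤ σ x := by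
  apply Finset.min'_le
  refine Finset.mem_image.mpr ⟨x, ?_, rfl⟩
  simp only [Finset.mem_filter, Finset.mem_univ, true_and]
  exact hr

lemma comp_exists (v : V) : ∃ x : V, G.Reachable x v ∧ σ x = comp G σ v := by
  have := Finset.min'_mem _ (filter_reachable_nonempty G σ v)
  rw [Finset.mem_image] at this
  obtain ⟨x, hx, hxe⟩ := this
  exact ⟨x, (Finset.mem_filter.mp hx).2, hxe⟩

lemma comp_congr {a b : V} (hab : G.Reachable a b) : comp G σ a = comp G σ b := by
  apply le_antisymm
  · obtain ⟨x, hx, hxe⟩ := comp_exists (G := G) (σ := σ) b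
    rw [← hxe]
    exact comp_le (hx.trans hab.symm)
  · obtain ⟨x, hx, hxe⟩ := comp_exists (G := G) (σ := σ) a
    rw [← hxe]
    exact comp_le (hx.trans hab)

lemma reachable_of_comp_eq {a b : V} (hab : comp G σ a = comp G σ b) : G.Reachable a b := by
  obtain ⟨x, hx, hxe⟩ := comp_exists (G := G) (σ := σ) a
  obtain ⟨x', hx', hxe'⟩ := comp_exists (G := G) (σ := σ) b
  have : x = x' := σ.injective (by rw [hxe, hxe', hab])
  subst this
  exact hx.symm.trans hx'

end Comp

end ClosedAux

/-- A finite simple graph `G` is closed iff there is a labeling of its vertices by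
`1, …, n` such that for every edge `{i, j}` with `i < j` and every `i < k < j`,
both `{i, k} ∈ E(G)` and `{k, j} ∈ E(G)`. -/
theorem closed_iff {V : Type*} [Fintype V] (G : SimpleGraph V) :
    (∃ σ : V ≃ Fin (Fintype.card V), ClosedWrt G σ) ↔
      (∃ σ : V ≃ Fin (Fintype.card V), ∀ i j k : V,
        G.Adj i j → σ i < σ k → σ k < σ j → G.Adj i k ∧ G.Adj k j) := by
  classical
  constructor
  · rintro ⟨σ, hσ⟩
    letI : DecidableRel G.Reachable := fun _ _ => Classical.dec _
    set key : V → Lex (Fin (Fintype.card V) × Fin (Fintype.card V)) :=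
      fun v => toLex (ClosedAux.comp G σ v, σ v) with hkey
    have keyinj : Function.Injective key := by
      intro a b hab
      have : (ClosedAux.comp G σ a, σ a) = (ClosedAux.comp G σ b, σ b) := congrArg ofLex hab
      exact σ.injective (congrArg Prod.snd this)
    obtain ⟨τ, hτ⟩ := ClosedAux.exists_mono_equiv key keyinj
    refine ⟨τ, ?_⟩
    intro i j k hij hik hkj
    have hik' : key i < key k := (hτ i k).mp hik
    have hkj' : key k < key j := (hτ k j).mp hkj
    rw [hkey] at hik' hkj'
    simp only [] at hik' hkj'
    rw [Prod.Lex.lt_iff] at hik' hkj'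
    have hcij : ClosedAux.comp G σ i = ClosedAux.comp G σ j := ClosedAux.comp_congr hij.reachable
    have hcik : ClosedAux.comp G σ i = ClosedAux.comp G σ k ∧ σ i < σ k := by
      rcases hik' with hh | hh
      · rcases hkj' with hh' | hh'
        · exact absurd (hh.trans hh') (by rw [hcij]; exact lt_irrefl _)
        · exact absurd (hh'.1 ▸ hh) (by rw [hcij]; exact lt_irrefl _)
      · exact hh
    have hσik : σ i < σ k := hcik.2
    have hσkj : σ k < σ j := by
      rcases hkj' with hh | hh
      · exact absurd (hcik.1 ▸ hh) (by rw [hcij]; exact lt_irrefl _)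
      · exact hh.2
    have hreach : G.Reachable k i := (ClosedAux.reachable_of_comp_eq hcik.1).symm
    have hAik : G.Adj i k := ClosedAux.adj_of_between hσ hij hσik hσkj hreach
    have hAkj : G.Adj k j := ClosedAux.up hσ hAik hij hσik (hσik.trans hσkj)
      (fun hh => (lt_irrefl _ (hh ▸ hσkj)))
    exact ⟨hAik, hAkj⟩
  · rintro ⟨σ, hσ⟩
    refine ⟨σ, ?_⟩
    intro i j k l hij hkl h1 h2
    constructor
    · rintro rfl hne
      have : σ j ≠ σ l := fun hh => hne (σ.injective hh)
      rcases lt_or_gt_of_ne this with hh | hh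
      · exact (hσ i l j hkl h1 hh).2
      · exact ((hσ i j l hij h2 hh).2).symm
    · rintro rfl hne
      have : σ i ≠ σ k := fun hh => hne (σ.injective hh)
      rcases lt_or_gt_of_ne this with hh | hh
      · exact (hσ i j k hij hh h2).1
      · exact ((hσ k j i hkl hh h1).1).symm
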